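/- arXiv:2101.08943 — 5 statements merged into one kernel-verified Lean document; each statement's English description precedes it below -/
import Mathlib

section
/- For any symmetric-parametrization list 𝒫 = ((μ_v, θ_v))_{v ∈ V}, the value of M on the plus transform satisfies M(𝒫⁺) = Σ_{v₀ ∈ V} Σ_{v₁ ∈ V} μ_{v₀}·μ_{v₁}·max{|θ_{v₀}|, |θ_{v₁}|}. -/
open Finset
open scoped Classical

noncomputable section

/-- The value `M(P) = ∑ v, μ v * |θ v|` of a symmetric-parametrization list
`P = ((μ v, θ v))_v`. -/
def Mval {V : Type*} [Fintype V] (μ θ : V → ℝ) : ℝ := ∑ v, μ v * |θ v|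

/-- Weights of the minus transform `P⁻`. -/
def minusμ {V : Type*} (μ : V → ℝ) : V × V → ℝ := fun p => μ p.1 * μ p.2

/-- Parameters of the minus transform `P⁻`. -/
def minusθ {V : Type*} (θ : V → ℝ) : V × V → ℝ := fun p => θ p.1 * θ p.2

/-- The sign `∓ᵤ` : `-1` when `u = 1` (`true`), `+1` when `u = 0` (`false`). -/
def sgn : Bool → ℝ := fun u => if u then -1 else 1

/-- Weights of the plus transform `P⁺`
(when `1 ∓ᵤ θ₀ θ₁ = 0` the formula yields `0`, matching the convention that the
entry is then `(0, 0)`). -/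
def plusμ {V : Type*} (μ θ : V → ℝ) : Bool × V × V → ℝ :=
  fun p => μ p.2.1 * μ p.2.2 * (1 + sgn p.1 * (θ p.2.1 * θ p.2.2)) / 2

/-- Parameters of the plus transform `P⁺`
(division by zero is `0` in Lean, matching the convention that the entry is
`(0, 0)` when `1 ∓ᵤ θ₀ θ₁ = 0`). -/
def plusθ {V : Type*} (θ : V → ℝ) : Bool × V × V → ℝ :=
  fun p => (θ p.2.2 + sgn p.1 * θ p.2.1) / (1 + sgn p.1 * (θ p.2.1 * θ p.2.2))

/-!
Each entry of `𝒫⁺` contributes `μ⁺ |θ⁺| = μ_{v₀} μ_{v₁} |θ_{v₁} ∓ θ_{v₀}| / 2`: the factor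
`1 ∓ θ_{v₀} θ_{v₁}` cancels, and in the degenerate case both sides vanish, because
`(1 ∓ θ₀θ₁)² - (θ₁ ∓ θ₀)² = (1 - θ₀²)(1 - θ₁²) ≥ 0`. Summing the two signs gives
`|θ₁ - θ₀| + |θ₁ + θ₀| = 2 max(|θ₀|, |θ₁|)`.
-/

lemma abs_sub_add_abs_add (a b : ℝ) : |b - a| + |b + a| = 2 * max |a| |b| := by
  rcases abs_cases (b - a) with ⟨h₁, _⟩ | ⟨h₁, _⟩ <;>
    rcases abs_cases (b + a) with ⟨h₂, _⟩ | ⟨h₂, _⟩ <;>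
    rcases abs_cases a with ⟨h₃, _⟩ | ⟨h₃, _⟩ <;>
    rcases abs_cases b with ⟨h₄, _⟩ | ⟨h₄, _⟩ <;>
    rcases max_cases |a| |b| with ⟨h₅, _⟩ | ⟨h₅, _⟩ <;>
    rw [h₁, h₂, h₅] at * <;> linarith

lemma mul_abs_div_of_abs_le {x c : ℝ} (h : |x| ≤ c) : c * |x / c| = |x| := by
  rcases (abs_nonneg x).trans h |>.eq_or_lt with hc | hc
  · have hx : x = 0 := abs_nonpos_iff.mp (hc ▸ h)
    simp [hx, ← hc]
  · rw [abs_div, abs_of_pos hc, mul_div_cancel₀ _ hc.ne']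

lemma abs_add_mul_le_one_add_mul {a b s : ℝ} (ha : |a| ≤ 1) (hb : |b| ≤ 1) (hs : s ^ 2 = 1) :
    |b + s * a| ≤ 1 + s * (a * b) := by
  have ha2 : a ^ 2 ≤ 1 := by nlinarith [sq_abs a, abs_nonneg a]
  have hb2 : b ^ 2 ≤ 1 := by nlinarith [sq_abs b, abs_nonneg b]
  have hs1 : |s| = 1 :=
    (pow_eq_one_iff_of_nonneg (abs_nonneg s) two_ne_zero).mp (by rw [sq_abs, hs])
  have hnonneg : 0 ≤ 1 + s * (a * b) := by
    have : |s * (a * b)| ≤ 1 := by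
      rw [abs_mul, abs_mul, hs1, one_mul]
      exact mul_le_one₀ ha (abs_nonneg b) hb
    linarith [neg_abs_le (s * (a * b))]
  refine abs_le_of_sq_le_sq ?_ hnonneg
  have : (1 + s * (a * b)) ^ 2 - (b + s * a) ^ 2 = (1 - a ^ 2) * (1 - b ^ 2) := by
    linear_combination (a ^ 2 * b ^ 2 - a ^ 2) * hs
  nlinarith [mul_nonneg (sub_nonneg.mpr ha2) (sub_nonneg.mpr hb2)]

lemma sgn_sq (u : Bool) : sgn u ^ 2 = 1 := by
  cases u <;> simp [sgn]

lemma plusμ_mul_abs_plusθ {V : Type*} (μ θ : V → ℝ) (hθ : ∀ v, |θ v| ≤ 1) (p : Bool × V × V) :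
    plusμ μ θ p * |plusθ θ p| = μ p.2.1 * μ p.2.2 * |θ p.2.2 + sgn p.1 * θ p.2.1| / 2 := by
  obtain ⟨u, v₀, v₁⟩ := p
  have hcancel := mul_abs_div_of_abs_le (abs_add_mul_le_one_add_mul (hθ v₀) (hθ v₁) (sgn_sq u))
  simp only [plusμ, plusθ]
  linear_combination (μ v₀ * μ v₁ / 2) * hcancel

theorem stmt1_general {V : Type*} [Fintype V] (μ θ : V → ℝ)
    (hθ : ∀ v, θ v ∈ Set.Icc (-1 : ℝ) 1) :
    Mval (plusμ μ θ) (plusθ θ) = ∑ v₀, ∑ v₁, μ v₀ * μ v₁ * max |θ v₀| |θ v₁| := by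
  have habs : ∀ v, |θ v| ≤ 1 := fun v => abs_le.mpr (hθ v)
  simp only [Mval, plusμ_mul_abs_plusθ μ θ habs, Fintype.sum_prod_type, Fintype.sum_bool,
    ← sum_add_distrib]
  refine sum_congr rfl fun v₀ _ => sum_congr rfl fun v₁ _ => ?_
  have := abs_sub_add_abs_add (θ v₀) (θ v₁)
  simp only [sgn, if_true, Bool.false_eq_true, if_false, neg_one_mul, one_mul, ← sub_eq_add_neg]
  linear_combination (μ v₀ * μ v₁ / 2) * this

theorem stmt1 {V : Type*} [Fintype V] (μ θ : V → ℝ)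
    (hμ : ∀ v, 0 ≤ μ v) (hsum : ∑ v, μ v = 1) (hθ : ∀ v, θ v ∈ Set.Icc (-1 : ℝ) 1) :
    Mval (plusμ μ θ) (plusθ θ) = ∑ v₀, ∑ v₁, μ v₀ * μ v₁ * max |θ v₀| |θ v₁| :=
  stmt1_general μ θ hθ

end
end

section
/- For any symmetric-parametrization list 𝒫 = ((μ_v, θ_v))_{v ∈ V}, define H(𝒫) := Σ_{v ∈ V} μ_v · h((1 − |θ_v|)/2). Then 0 ≤ 1 − M(𝒫) ≤ H(𝒫) ≤ h((1 − M(𝒫))/2) ≤ 1. -/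
open Finset
open scoped Classical

noncomputable section

/-- The binary entropy function `h(ξ) = -ξ·log₂ ξ - (1-ξ)·log₂(1-ξ)`, with the
convention `h 0 = 0` (automatic, since `Real.logb 2 0 = 0` in Lean). -/
def binEnt (ξ : ℝ) : ℝ := -(ξ * Real.logb 2 ξ) - (1 - ξ) * Real.logb 2 (1 - ξ)

/- `h` is concave on `[0, 1]` with `h 0 = 0` and `h (1/2) = 1`, so it lies above its chord
`2ξ` on `[0, 1/2]`; averaging `1 - |θ v| ≤ h ((1 - |θ v|)/2)` against `μ` gives the lower
bound, and Jensen's inequality for the concave `h` at the points `(1 - |θ v|)/2`, whose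
`μ`-mean is `(1 - M)/2`, gives the upper one. -/

lemma binEnt_eq_binEntropy_div (ξ : ℝ) : binEnt ξ = Real.binEntropy ξ / Real.log 2 := by
  simp only [binEnt, Real.binEntropy, Real.logb, Real.log_inv]
  ring

lemma concaveOn_binEnt : ConcaveOn ℝ (Set.Icc 0 1) binEnt := by
  have h : binEnt = fun ξ => (Real.log 2)⁻¹ • Real.binEntropy ξ := by
    ext ξ
    rw [binEnt_eq_binEntropy_div, smul_eq_mul, inv_mul_eq_div]
  rw [h]
  exact Real.strictConcave_binEntropy.concaveOn.smul (by positivity)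

lemma binEnt_zero : binEnt 0 = 0 := by simp [binEnt]

lemma binEnt_two_inv : binEnt 2⁻¹ = 1 := by
  rw [binEnt_eq_binEntropy_div, Real.binEntropy_two_inv,
    div_self (Real.log_pos one_lt_two).ne']

lemma binEnt_le_one (ξ : ℝ) : binEnt ξ ≤ 1 := by
  rw [binEnt_eq_binEntropy_div, div_le_one (Real.log_pos one_lt_two)]
  exact Real.binEntropy_le_log_two

lemma two_mul_le_binEnt {ξ : ℝ} (h0 : 0 ≤ ξ) (h1 : ξ ≤ 2⁻¹) : 2 * ξ ≤ binEnt ξ := by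
  have chord := concaveOn_binEnt.2 (show (0 : ℝ) ∈ Set.Icc 0 1 by norm_num)
    (show (2⁻¹ : ℝ) ∈ Set.Icc 0 1 by norm_num) (show 0 ≤ 1 - 2 * ξ by linarith)
    (show 0 ≤ 2 * ξ by linarith) (by ring)
  have hpt : (1 - 2 * ξ) • (0 : ℝ) + (2 * ξ) • (2⁻¹ : ℝ) = ξ := by
    simp only [smul_eq_mul]
    ring
  rwa [hpt, binEnt_zero, binEnt_two_inv, smul_eq_mul, smul_eq_mul, mul_zero, mul_one,
    zero_add] at chord

lemma one_sub_le_binEnt {t : ℝ} (h0 : 0 ≤ t) (h1 : t ≤ 1) :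
    1 - t ≤ binEnt ((1 - t) / 2) := by
  linarith [two_mul_le_binEnt (ξ := (1 - t) / 2) (by linarith) (by linarith)]

section Mval

variable {V : Type*} [Fintype V] {μ θ : V → ℝ}

lemma Mval_le_one (hμ : ∀ v, 0 ≤ μ v) (hsum : ∑ v, μ v = 1) (hθ : ∀ v, |θ v| ≤ 1) :
    Mval μ θ ≤ 1 :=
  hsum ▸ sum_le_sum fun v _ => mul_le_of_le_one_right (hμ v) (hθ v)

lemma sum_mul_one_sub_abs (hsum : ∑ v, μ v = 1) :
    ∑ v, μ v * (1 - |θ v|) = 1 - Mval μ θ := by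
  simp only [mul_sub, mul_one, sum_sub_distrib, hsum, Mval]

lemma sum_smul_one_sub_abs_div_two (hsum : ∑ v, μ v = 1) :
    ∑ v, μ v • ((1 - |θ v|) / 2) = (1 - Mval μ θ) / 2 := by
  simp only [smul_eq_mul, ← mul_div_assoc, ← sum_div, sum_mul_one_sub_abs hsum]

end Mval

theorem stmt5 {V : Type*} [Fintype V] (μ θ : V → ℝ)
    (hμ : ∀ v, 0 ≤ μ v) (hsum : ∑ v, μ v = 1) (hθ : ∀ v, θ v ∈ Set.Icc (-1 : ℝ) 1) :
    0 ≤ 1 - Mval μ θ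
    ∧ 1 - Mval μ θ ≤ ∑ v, μ v * binEnt ((1 - |θ v|) / 2)
    ∧ (∑ v, μ v * binEnt ((1 - |θ v|) / 2)) ≤ binEnt ((1 - Mval μ θ) / 2)
    ∧ binEnt ((1 - Mval μ θ) / 2) ≤ 1 := by
  have habs : ∀ v, |θ v| ≤ 1 := fun v => abs_le.2 (hθ v)
  have hpts : ∀ v ∈ univ, (1 - |θ v|) / 2 ∈ Set.Icc (0 : ℝ) 1 := fun v _ =>
    ⟨by linarith [habs v], by linarith [abs_nonneg (θ v)]⟩
  refine ⟨sub_nonneg.2 (Mval_le_one hμ hsum habs), ?_, ?_, binEnt_le_one _⟩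
  · rw [← sum_mul_one_sub_abs hsum]
    exact sum_le_sum fun v _ =>
      mul_le_mul_of_nonneg_left (one_sub_le_binEnt (abs_nonneg _) (habs v)) (hμ v)
  · have jensen := concaveOn_binEnt.le_map_sum (fun v _ => hμ v) hsum hpts
    rwa [sum_smul_one_sub_abs_div_two hsum] at jensen

end
end

section
/- For any symmetric-parametrization list 𝒫 and either sign ± ∈ {−, +}, applying the absolute-value operator A before and after the transform gives the same list as applying it only after: (𝒫^A)^±, with A applied again, equals (𝒫^±)^A as multisets of weight–parameter pairs; that is, ((𝒫^A)^±)^A = (𝒫^±)^A as multisets. -/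
/-!
Taking absolute values commutes with the minus transform because `|θ₀ θ₁| = |θ₀| |θ₁|`.
For the plus transform, the entry of `(𝒫^A)⁺` indexed by `(u, v₀, v₁)` equals, up to the sign of
its parameter, the entry of `𝒫⁺` indexed by `(u', v₀, v₁)`, where `u'` is `u` flipped exactly when
`θ_{v₀} θ_{v₁} < 0`: this flip turns `∓_u |θ₀| |θ₁|` into `∓_{u'} θ₀ θ₁`, and the numerators then
agree up to sign since they have the same square. The flip is an involution of the index set, so
the two multisets coincide.
-/

open Finset
open scoped Classical

noncomputable section

/-- The multiset of weight–parameter pairs of a list (two lists are identified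
when these multisets coincide). -/
def toMultiset {V : Type*} [Fintype V] (μ θ : V → ℝ) : Multiset (ℝ × ℝ) :=
  Finset.univ.val.map fun v => (μ v, θ v)

theorem toMultiset_comp_equiv {V W : Type*} [Fintype V] [Fintype W] (e : W ≃ V)
    (μ θ : V → ℝ) : toMultiset (fun w => μ (e w)) (fun w => θ (e w)) = toMultiset μ θ := by
  change Multiset.map ((fun v => (μ v, θ v)) ∘ e) _ = _
  rw [← Multiset.map_map]
  exact congrArg (Multiset.map _) (congrArg Finset.val (Finset.map_univ_equiv e))

theorem sgn_not (u : Bool) : sgn (!u) = -sgn u := by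
  cases u <;> simp [sgn]

theorem sgn_mul_self (u : Bool) : sgn u * sgn u = 1 := by
  cases u <;> simp [sgn]

def flipIfNeg (a b : ℝ) (u : Bool) : Bool := xor (decide (a * b < 0)) u

theorem sgn_flipIfNeg_mul (a b : ℝ) (u : Bool) :
    sgn (flipIfNeg a b u) * (a * b) = sgn u * (|a| * |b|) := by
  rw [← abs_mul, flipIfNeg]
  by_cases h : a * b < 0
  · simp only [h, decide_true, Bool.true_xor, sgn_not, abs_of_neg h]
    ring
  · simp only [h, decide_false, Bool.false_xor, abs_of_nonneg (not_lt.mp h)]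

theorem abs_add_sgn_flipIfNeg_mul (a b : ℝ) (u : Bool) :
    |b + sgn (flipIfNeg a b u) * a| = |(|b| + sgn u * |a|)| := by
  apply sq_eq_sq_iff_abs_eq_abs _ _ |>.mp
  linear_combination (2 : ℝ) * sgn_flipIfNeg_mul a b u + a ^ 2 * sgn_mul_self (flipIfNeg a b u)
    - |a| ^ 2 * sgn_mul_self u - sq_abs a - sq_abs b

section PlusTransform

variable {V : Type*} (θ : V → ℝ)

theorem flipIfNeg_involutive :
    Function.Involutive fun p : Bool × V × V => (flipIfNeg (θ p.2.1) (θ p.2.2) p.1, p.2) := by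
  rintro ⟨u, v₀, v₁⟩
  simp [flipIfNeg]

def plusFlip : Equiv.Perm (Bool × V × V) :=
  Function.Involutive.toPerm _ (flipIfNeg_involutive θ)

theorem plusμ_abs (μ : V → ℝ) (p : Bool × V × V) :
    plusμ μ (fun v => |θ v|) p = plusμ μ θ (plusFlip θ p) := by
  simp only [plusμ, plusFlip, Function.Involutive.coe_toPerm, sgn_flipIfNeg_mul]

theorem abs_plusθ_abs (p : Bool × V × V) :
    |plusθ (fun v => |θ v|) p| = |plusθ θ (plusFlip θ p)| := by
  simp only [plusθ, plusFlip, Function.Involutive.coe_toPerm, abs_div, sgn_flipIfNeg_mul,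
    abs_add_sgn_flipIfNeg_mul]

end PlusTransform

theorem stmt6_general {V : Type*} [Fintype V] (μ θ : V → ℝ) :
    (toMultiset (minusμ μ) (fun p => |minusθ (fun v => |θ v|) p|)
      = toMultiset (minusμ μ) (fun p => |minusθ θ p|))
    ∧ (toMultiset (plusμ μ (fun v => |θ v|)) (fun p => |plusθ (fun v => |θ v|) p|)
      = toMultiset (plusμ μ θ) (fun p => |plusθ θ p|)) := by
  constructor
  · simp only [minusθ, abs_mul, abs_abs]
  · rw [← toMultiset_comp_equiv (plusFlip θ) (plusμ μ θ)]
    exact congrArg₂ toMultiset (funext (plusμ_abs θ μ)) (funext (abs_plusθ_abs θ))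

theorem stmt6 {V : Type*} [Fintype V] (μ θ : V → ℝ)
    (hμ : ∀ v, 0 ≤ μ v) (hsum : ∑ v, μ v = 1) (hθ : ∀ v, θ v ∈ Set.Icc (-1 : ℝ) 1) :
    (toMultiset (minusμ μ) (fun p => |minusθ (fun v => |θ v|) p|)
      = toMultiset (minusμ μ) (fun p => |minusθ θ p|))
    ∧ (toMultiset (plusμ μ (fun v => |θ v|)) (fun p => |plusθ (fun v => |θ v|) p|)
      = toMultiset (plusμ μ θ) (fun p => |plusθ θ p|)) :=
  stmt6_general μ θ

end
end

section
/- Let 𝒫 = ((μ_v, θ_v))_{v=1}^{i} be a symmetric-parametrization list indexed by {1, …, i} with μ_v > 0 for all v, Σ_{v=1}^{i} μ_v = 1, and 0 ≤ θ_1 < θ_2 < ⋯ < θ_i ≤ 1, and fix j ∈ {1, …, i−1}. Let 𝒫' be the list obtained from 𝒫 by replacing the two entries (μ_j, θ_j) and (μ_{j+1}, θ_{j+1}) with the single entry (μ_j + μ_{j+1}, (μ_j·θ_j + μ_{j+1}·θ_{j+1})/(μ_j + μ_{j+1})). Then M(𝒫⁺) − M(𝒫'⁺) = μ_j·μ_{j+1}·(θ_{j+1}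 − θ_j); in particular this degrading merge strictly decreases the M-value after the plus transform. -/
/-!
If `θ_v, θ_w ∈ [0, 1]`, the two entries `(0, v, w)` and `(1, v, w)` of `𝒫⁺` together contribute
`μ_v μ_w ((θ_v + θ_w) / 2 + |θ_w - θ_v| / 2) = μ_v μ_w max(θ_v, θ_w)`, so
`M(𝒫⁺) = ∑ μ_v μ_w max(θ_v, θ_w)` is a quadratic form in the multiset of entries. Merging the
neighbours `j, j + 1` into their weighted average leaves all cross terms with the other entries
unchanged, because those have parameters outside `(θ_j, θ_{j+1})`, where `max (θ_v, ·)` is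
affine. Only the `2 × 2` block changes, and it loses exactly `μ_j μ_{j+1} (θ_{j+1} - θ_j)`.
-/

open Finset
open scoped Classical

noncomputable section

section DoubleSum

variable {α R : Type*} [AddCommMonoid R] (k : α → α → R)

def doubleSum (S T : Multiset α) : R := (S.map fun p => (T.map (k p)).sum).sum

lemma doubleSum_add_left (S T U : Multiset α) :
    doubleSum k (S + T) U = doubleSum k S U + doubleSum k T U := by
  simp [doubleSum]

lemma doubleSum_add_right (S T U : Multiset α) :
    doubleSum k S (T + U) = doubleSum k S T + doubleSum k S U := by
  simp [doubleSum, Multiset.sum_map_add]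

lemma doubleSum_comm (hk : ∀ p q, k p q = k q p) (S T : Multiset α) :
    doubleSum k S T = doubleSum k T S := by
  induction S using Multiset.induction with
  | empty => simp [doubleSum]
  | cons a S ih =>
    rw [← Multiset.singleton_add, doubleSum_add_left, doubleSum_add_right, ih]
    simp [doubleSum, hk a]

lemma doubleSum_congr_right {S T U : Multiset α}
    (h : ∀ p ∈ S, (T.map (k p)).sum = (U.map (k p)).sum) :
    doubleSum k S T = doubleSum k S U :=
  congrArg Multiset.sum (Multiset.map_congr rfl h)

lemma doubleSum_self_sub_of_add_eq {R : Type*} [CommRing R] (k : α → α → R)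
    (hk : ∀ p q, k p q = k q p) {S S' T C : Multiset α}
    (h : S' + T = S + C) (hcross : doubleSum k S T = doubleSum k S C) :
    doubleSum k S S - doubleSum k S' S' =
      2 * doubleSum k C T - doubleSum k C C - doubleSum k T T := by
  have hdiag := congrArg (fun X => doubleSum k X X) h
  have hleft := congrArg (fun X => doubleSum k X T) h
  simp only [doubleSum_add_left, doubleSum_add_right] at hdiag hleft
  rw [doubleSum_comm k hk T S', doubleSum_comm k hk C S] at hdiag
  linear_combination -hdiag + 2 * hleft + 2 * hcross

end DoubleSum

lemma half_mul_abs_div {c x : ℝ} (hc : 0 ≤ c) (hx : c = 0 → x = 0) :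
    c / 2 * |x / c| = |x| / 2 := by
  rcases hc.eq_or_lt with rfl | hc
  · simp [hx rfl]
  · rw [abs_div, abs_of_pos hc]
    field_simp

lemma plus_pair_eq_max {a b : ℝ} (ha : a ∈ Set.Icc 0 1) (hb : b ∈ Set.Icc 0 1) :
    (1 + a * b) / 2 * |(b + a) / (1 + a * b)| + (1 - a * b) / 2 * |(b - a) / (1 - a * b)|
      = max a b := by
  obtain ⟨ha₀, ha₁⟩ := ha
  obtain ⟨hb₀, hb₁⟩ := hb
  rw [half_mul_abs_div (by positivity) fun h => by nlinarith [mul_nonneg ha₀ hb₀],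
    half_mul_abs_div (by nlinarith) fun h => by nlinarith, abs_of_nonneg (by linarith : 0 ≤ b + a)]
  linarith [max_sub_min_eq_abs a b, min_add_max a b]

lemma sum_plusμ_mul_abs_plusθ {V : Type*} (μ θ : V → ℝ) (v₀ v₁ : V)
    (h₀ : θ v₀ ∈ Set.Icc 0 1) (h₁ : θ v₁ ∈ Set.Icc 0 1) :
    ∑ u : Bool, plusμ μ θ (u, v₀, v₁) * |plusθ θ (u, v₀, v₁)|
      = μ v₀ * μ v₁ * max (θ v₀) (θ v₁) := by
  rw [← plus_pair_eq_max h₀ h₁]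
  simp only [Fintype.sum_bool, plusμ, plusθ, sgn, Bool.false_eq_true, if_true, if_false]
  ring_nf

def maxKernel (p q : ℝ × ℝ) : ℝ := p.1 * q.1 * max p.2 q.2

lemma maxKernel_comm (p q : ℝ × ℝ) : maxKernel p q = maxKernel q p := by
  rw [maxKernel, maxKernel, max_comm, mul_comm p.1]

lemma Mval_plus_eq_doubleSum {V : Type*} [Fintype V] (μ θ : V → ℝ)
    (hθ : ∀ v, θ v ∈ Set.Icc 0 1) :
    Mval (plusμ μ θ) (plusθ θ) = doubleSum maxKernel (toMultiset μ θ) (toMultiset μ θ) := by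
  rw [Mval, Fintype.sum_prod_type, Finset.sum_comm, Fintype.sum_prod_type]
  simp only [sum_plusμ_mul_abs_plusθ μ θ _ _ (hθ _) (hθ _)]
  simp only [doubleSum, toMultiset, Multiset.map_map, Function.comp_def, maxKernel,
    Finset.sum_eq_multiset_sum]

lemma forall_mem_toMultiset {V : Type*} [Fintype V] {μ θ : V → ℝ} {P : ℝ × ℝ → Prop} :
    (∀ p ∈ toMultiset μ θ, P p) ↔ ∀ v, P (μ v, θ v) := by
  simp [toMultiset]

section Merge

variable {m₀ m₁ t₀ t₁ t : ℝ}

lemma weightedAverage_mem_Icc (h₀ : 0 < m₀) (h₁ : 0 < m₁) (ht : t₀ ≤ t₁) :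
    (m₀ * t₀ + m₁ * t₁) / (m₀ + m₁) ∈ Set.Icc t₀ t₁ := by
  constructor
  · rw [le_div_iff₀ (by positivity)]; nlinarith
  · rw [div_le_iff₀ (by positivity)]; nlinarith

-- For `p.2 ∉ (t₀, t₁)` the map `max p.2` is affine on `[t₀, t₁]`.
lemma doubleSum_maxKernel_merge (ht : (m₀ + m₁) * t = m₀ * t₀ + m₁ * t₁)
    (ht₀ : t₀ ≤ t) (ht₁ : t ≤ t₁) {S : Multiset (ℝ × ℝ)} (hS : ∀ p ∈ S, p.2 ≤ t₀ ∨ t₁ ≤ p.2) :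
    doubleSum maxKernel S {(m₀, t₀), (m₁, t₁)} = doubleSum maxKernel S {(m₀ + m₁, t)} := by
  refine doubleSum_congr_right maxKernel fun p hp => ?_
  simp only [Multiset.insert_eq_cons, Multiset.map_cons, Multiset.map_singleton,
    Multiset.sum_cons, Multiset.sum_singleton, maxKernel]
  rcases hS p hp with hp | hp
  · rw [max_eq_right hp, max_eq_right (hp.trans (ht₀.trans ht₁)), max_eq_right (hp.trans ht₀)]
    linear_combination -p.1 * ht
  · rw [max_eq_left ((ht₀.trans ht₁).trans hp), max_eq_left hp, max_eq_left (ht₁.trans hp)]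
    ring

lemma merge_defect_maxKernel (ht : (m₀ + m₁) * t = m₀ * t₀ + m₁ * t₁)
    (ht₀ : t₀ ≤ t) (ht₁ : t ≤ t₁) :
    2 * doubleSum maxKernel {(m₀ + m₁, t)} {(m₀, t₀), (m₁, t₁)}
        - doubleSum maxKernel {(m₀ + m₁, t)} {(m₀ + m₁, t)}
        - doubleSum maxKernel {(m₀, t₀), (m₁, t₁)} {(m₀, t₀), (m₁, t₁)}
      = m₀ * m₁ * (t₁ - t₀) := by
  simp only [doubleSum, Multiset.insert_eq_cons, Multiset.map_cons, Multiset.map_singleton,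
    Multiset.sum_cons, Multiset.sum_singleton, maxKernel, max_self, max_eq_left ht₀,
    max_eq_right ht₁, max_eq_left (ht₀.trans ht₁), max_eq_right (ht₀.trans ht₁)]
  linear_combination (m₀ - m₁) * ht

end Merge

theorem stmt16 {W : Type*} [Fintype W] (i : ℕ) (μ θ : Fin i → ℝ)
    (hμ : ∀ v, 0 < μ v)
    (hθ0 : ∀ v, 0 ≤ θ v) (hθ1 : ∀ v, θ v ≤ 1) (hmono : StrictMono θ)
    (j : ℕ) (hj : j + 1 < i)
    (μ' θ' : W → ℝ)
    (hrepl : toMultiset μ' θ'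
        + {(μ ⟨j, by omega⟩, θ ⟨j, by omega⟩), (μ ⟨j + 1, hj⟩, θ ⟨j + 1, hj⟩)}
      = toMultiset μ θ
        + {(μ ⟨j, by omega⟩ + μ ⟨j + 1, hj⟩,
            (μ ⟨j, by omega⟩ * θ ⟨j, by omega⟩ + μ ⟨j + 1, hj⟩ * θ ⟨j + 1, hj⟩)
              / (μ ⟨j, by omega⟩ + μ ⟨j + 1, hj⟩))}) :
    Mval (plusμ μ θ) (plusθ θ) - Mval (plusμ μ' θ') (plusθ θ')
        = μ ⟨j, by omega⟩ * μ ⟨j + 1, hj⟩ * (θ ⟨j + 1, hj⟩ - θ ⟨j, by omega⟩)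
    ∧ Mval (plusμ μ' θ') (plusθ θ') < Mval (plusμ μ θ) (plusθ θ) := by
  set v₀ : Fin i := ⟨j, by omega⟩
  set v₁ : Fin i := ⟨j + 1, hj⟩
  have hlt : θ v₀ < θ v₁ := hmono (Fin.mk_lt_mk.mpr j.lt_succ_self)
  set t := (μ v₀ * θ v₀ + μ v₁ * θ v₁) / (μ v₀ + μ v₁)
  have ht : (μ v₀ + μ v₁) * t = μ v₀ * θ v₀ + μ v₁ * θ v₁ :=
    mul_div_cancel₀ _ (by linarith [hμ v₀, hμ v₁])
  obtain ⟨ht₀, ht₁⟩ := weightedAverage_mem_Icc (hμ v₀) (hμ v₁) hlt.le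
  have hθ : ∀ v, θ v ∈ Set.Icc 0 1 := fun v => ⟨hθ0 v, hθ1 v⟩
  have hθ' : ∀ w, θ' w ∈ Set.Icc 0 1 :=
    (forall_mem_toMultiset (P := fun p => p.2 ∈ Set.Icc 0 1)).mp fun p hp => by
      rcases Multiset.mem_add.mp (hrepl ▸ Multiset.mem_add.mpr (Or.inl hp)) with hp | hp
      · exact (forall_mem_toMultiset (P := fun p => p.2 ∈ Set.Icc 0 1)).mpr hθ p hp
      · rw [Multiset.mem_singleton.mp hp]
        exact ⟨(hθ0 v₀).trans ht₀, ht₁.trans (hθ1 v₁)⟩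
  have hgap : ∀ p ∈ toMultiset μ θ, p.2 ≤ θ v₀ ∨ θ v₁ ≤ p.2 :=
    forall_mem_toMultiset.mpr fun v => (Nat.lt_or_ge v j.succ).imp
      (fun h => hmono.monotone (Fin.mk_le_mk.mpr (Nat.lt_succ_iff.mp h)))
      (fun h => hmono.monotone (Fin.mk_le_mk.mpr h))
  have key := doubleSum_self_sub_of_add_eq maxKernel maxKernel_comm hrepl
    (doubleSum_maxKernel_merge ht ht₀ ht₁ hgap)
  rw [merge_defect_maxKernel ht ht₀ ht₁, ← Mval_plus_eq_doubleSum μ θ hθ,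
    ← Mval_plus_eq_doubleSum μ' θ' hθ'] at key
  have hpos : 0 < μ v₀ * μ v₁ * (θ v₁ - θ v₀) :=
    mul_pos (mul_pos (hμ v₀) (hμ v₁)) (sub_pos.mpr hlt)
  exact ⟨key, by linarith⟩
end
end

section
/- Let C ≥ 2, let μ_1, …, μ_C be positive reals with Σ_{v=1}^{C} μ_v = 1, and let 0 ≤ θ_1 < θ_2 < ⋯ < θ_C ≤ 1. Then min_{1 ≤ v ≤ C−1} μ_v·μ_{v+1}·(θ_{v+1} − θ_v) ≤ (1 − μ_C)·(1 − μ_1)·(θ_C − θ_1)/(C − 1)³, and consequently this minimum is at most θ_C/(C − 1)³. -/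
/-!
Write the minimum as `min_v a_v b_v c_v` with `a_v = μ_v`, `b_v = μ_{v+1}` and
`c_v = θ_{v+1} - θ_v`, all nonnegative. The `C - 1` factors sum to `1 - μ_C`, `1 - μ_1` and
`θ_C - θ_1` respectively. The minimum raised to the power `C - 1` is at most the product of all the
`a_v b_v c_v`, and AM-GM bounds each of the three products by the `(C - 1)`-th power of the
corresponding mean.
-/

open Finset

namespace Real

theorem prod_le_mean_pow {ι : Type*} (s : Finset ι) {f : ι → ℝ} (hf : ∀ i ∈ s, 0 ≤ f i) :
    ∏ i ∈ s, f i ≤ ((∑ i ∈ s, f i) / #s) ^ #s := by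
  rcases s.eq_empty_or_nonempty with rfl | hs
  · simp
  have amgm := geom_mean_le_arith_mean s (fun _ => 1) f (by simp) (by simpa using hs) hf
  simp only [rpow_one, one_mul, sum_const, nsmul_eq_mul, mul_one] at amgm
  calc ∏ i ∈ s, f i = ((∏ i ∈ s, f i) ^ ((#s : ℝ)⁻¹)) ^ #s :=
        (rpow_inv_natCast_pow (prod_nonneg hf) (card_ne_zero.2 hs)).symm
    _ ≤ ((∑ i ∈ s, f i) / #s) ^ #s := pow_le_pow_left₀ (rpow_nonneg (prod_nonneg hf) _) amgm _

theorem inf'_mul_mul_le_mean_mul_mean_mul_mean {ι : Type*} (s : Finset ι) (hs : s.Nonempty)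
    {a b c : ι → ℝ} (ha : ∀ i ∈ s, 0 ≤ a i) (hb : ∀ i ∈ s, 0 ≤ b i) (hc : ∀ i ∈ s, 0 ≤ c i) :
    s.inf' hs (fun i => a i * b i * c i)
      ≤ (∑ i ∈ s, a i) / #s * ((∑ i ∈ s, b i) / #s) * ((∑ i ∈ s, c i) / #s) := by
  set m := s.inf' hs (fun i => a i * b i * c i)
  have hsa := sum_nonneg ha
  have hsb := sum_nonneg hb
  have hsc := sum_nonneg hc
  have hmean : 0 ≤ (∑ i ∈ s, a i) / #s * ((∑ i ∈ s, b i) / #s) * ((∑ i ∈ s, c i) / #s) := by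
    positivity
  rcases le_or_gt m 0 with hm | hm
  · exact hm.trans hmean
  refine le_of_pow_le_pow_left₀ (card_ne_zero.2 hs) hmean ?_
  calc m ^ #s = ∏ _i ∈ s, m := (prod_const m).symm
    _ ≤ ∏ i ∈ s, a i * b i * c i :=
        prod_le_prod (fun _ _ => hm.le) fun i hi => inf'_le _ hi
    _ = (∏ i ∈ s, a i) * (∏ i ∈ s, b i) * ∏ i ∈ s, c i := by
        rw [prod_mul_distrib, prod_mul_distrib]
    _ ≤ ((∑ i ∈ s, a i) / #s) ^ #s * ((∑ i ∈ s, b i) / #s) ^ #s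
          * ((∑ i ∈ s, c i) / #s) ^ #s := by
        gcongr <;> first | exact prod_nonneg ‹_› | exact prod_le_mean_pow s ‹_›
    _ = _ := by rw [mul_pow, mul_pow]

end Real

theorem Fin.sum_univ_succ_sub_castSucc {M : Type*} [AddCommGroup M] {n : ℕ}
    (f : Fin (n + 1) → M) :
    ∑ i : Fin n, (f i.succ - f i.castSucc) = f (Fin.last n) - f 0 := by
  rw [sum_sub_distrib, sub_eq_sub_iff_add_eq_add, add_comm, ← Fin.sum_univ_succ,
    Fin.sum_univ_castSucc f, add_comm]

theorem inf'_mul_succ_mul_sub_le {n : ℕ} (hn : (univ : Finset (Fin n)).Nonempty)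
    {μ θ : Fin (n + 1) → ℝ} (hμ : ∀ v, 0 ≤ μ v) (hsum : ∑ v, μ v = 1) (hθ : Monotone θ) :
    univ.inf' hn (fun v : Fin n => μ v.castSucc * μ v.succ * (θ v.succ - θ v.castSucc))
      ≤ (1 - μ (Fin.last n)) * (1 - μ 0) * (θ (Fin.last n) - θ 0) / n ^ 3 := by
  have hmean := Real.inf'_mul_mul_le_mean_mul_mean_mul_mean univ hn
    (fun v _ => hμ v.castSucc) (fun v _ => hμ v.succ)
    (fun v _ => sub_nonneg.2 (hθ (Fin.castSucc_le_succ v)))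
  have hinit : ∑ v : Fin n, μ v.castSucc = 1 - μ (Fin.last n) := by
    rw [← hsum, Fin.sum_univ_castSucc]; ring
  have htail : ∑ v : Fin n, μ v.succ = 1 - μ 0 := by
    rw [← hsum, Fin.sum_univ_succ]; ring
  rw [hinit, htail, Fin.sum_univ_succ_sub_castSucc, card_univ, Fintype.card_fin] at hmean
  exact hmean.trans_eq (by ring)

theorem stmt18 (C : ℕ) (hC : 2 ≤ C) (μ θ : Fin C → ℝ)
    (hμ : ∀ v, 0 < μ v) (hsum : ∑ v, μ v = 1)
    (hθ0 : ∀ v, 0 ≤ θ v) (hmono : StrictMono θ) :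
    (Finset.univ.inf' ⟨(⟨0, by omega⟩ : Fin (C - 1)), Finset.mem_univ _⟩
        (fun v : Fin (C - 1) =>
          μ (v.castLE (by omega)) * μ (v.succ.cast (by omega))
            * (θ (v.succ.cast (by omega)) - θ (v.castLE (by omega))))
      ≤ (1 - μ ⟨C - 1, by omega⟩) * (1 - μ ⟨0, by omega⟩)
          * (θ ⟨C - 1, by omega⟩ - θ ⟨0, by omega⟩) / ((C : ℝ) - 1) ^ 3)
    ∧ (Finset.univ.inf' ⟨(⟨0, by omega⟩ : Fin (C - 1)), Finset.mem_univ _⟩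
        (fun v : Fin (C - 1) =>
          μ (v.castLE (by omega)) * μ (v.succ.cast (by omega))
            * (θ (v.succ.cast (by omega)) - θ (v.castLE (by omega))))
      ≤ θ ⟨C - 1, by omega⟩ / ((C : ℝ) - 1) ^ 3) := by
  obtain ⟨n, rfl⟩ : ∃ n, C = n + 1 := ⟨C - 1, by omega⟩
  have hbound := inf'_mul_succ_mul_sub_le ⟨⟨0, by omega⟩, mem_univ _⟩
    (fun v => (hμ v).le) hsum hmono.monotone
  have hμ_le_one : ∀ v, μ v ≤ 1 := fun v =>
    hsum ▸ single_le_sum (fun v _ => (hμ v).le) (mem_univ v)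
  rw [Nat.cast_add_one, add_sub_cancel_right]
  refine ⟨hbound, hbound.trans (div_le_div_of_nonneg_right ?_ (by positivity))⟩
  calc _ ≤ 1 * 1 * (θ (Fin.last n) - θ 0) := by
        gcongr ?_ * ?_ * _
        · exact sub_nonneg.2 (hmono.monotone (Fin.zero_le _))
        · exact sub_nonneg.2 (hμ_le_one 0)
        · linarith [hμ (Fin.last n)]
        · linarith [hμ 0]
    _ ≤ θ (Fin.last n) := by linarith [hθ0 0]
end
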